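/- arXiv:2210.07616 — 6 statements merged into one kernel-verified Lean document; each statement's English description precedes it below -/
import Mathlib

section
/- Every subgroup G ≤ Homeo(ℝ) acting freely on ℝ (i.e., every non-identity element of G has no fixed point) is abelian, and moreover its action is semi-conjugate to an action by translations of ℝ. -/
open Function Set Filter Topology

/-- The group of homeomorphisms of the real line, with `(f * g) x = f (g x)`. -/
abbrev HomeoR : Type := ℝ ≃ₜ ℝ

instance : Group HomeoR where
  mul f g := g.trans f
  one := Homeomorph.refl ℝ
  inv := Homeomorph.symm
  mul_assoc _ _ _ := rfl
  one_mul f := by ext x; rfl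
  mul_one f := by ext x; rfl
  inv_mul_cancel f := by ext x; exact f.symm_apply_apply x

@[simp] lemma HomeoR.mul_apply (f g : HomeoR) (x : ℝ) : (f * g) x = f (g x) := rfl
@[simp] lemma HomeoR.one_apply (x : ℝ) : (1 : HomeoR) x = x := rfl
@[simp] lemma HomeoR.inv_eq_symm (f : HomeoR) : f⁻¹ = f.symm := rfl

/-- The subgroup of orientation-preserving homeomorphisms of the line,
i.e. strictly increasing ones. -/
def HomeoPlus : Subgroup HomeoR where
  carrier := {f | StrictMono (f : ℝ → ℝ)}
  one_mem' := strictMono_id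
  mul_mem' hf hg := hf.comp hg
  inv_mem' := by
    intro f hf a b hab
    have h := hf.lt_iff_lt (a := f.symm a) (b := f.symm b)
    rw [f.apply_symm_apply, f.apply_symm_apply] at h
    exact h.mp hab

/-- `G` has at most `N` fixed points: every non-identity element fixes at most `N` points. -/
def HasAtMostNFixedPoints (G : Subgroup HomeoR) (N : ℕ) : Prop :=
  ∀ g ∈ G, g ≠ 1 → ∃ S : Finset ℝ, S.card ≤ N ∧ ∀ x : ℝ, g x = x → x ∈ S

/-- A continuous non-decreasing map `ℝ → ℝ` which is proper. -/
def MonotoneProper (h : ℝ → ℝ) : Prop :=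
  Continuous h ∧ Monotone h ∧ Tendsto h atTop atTop ∧ Tendsto h atBot atBot

/-- The action of `G` is (positively) semi-conjugate to the action of `F`. -/
def IsSemiConjTo (G F : Subgroup HomeoR) : Prop :=
  ∃ (θ : G →* F) (h : ℝ → ℝ), Surjective θ ∧ MonotoneProper h ∧
    ∀ g : G, ∀ x : ℝ, (θ g : HomeoR) (h x) = h ((g : HomeoR) x)

def IsAffineHomeo (f : HomeoR) : Prop := ∃ a b : ℝ, a ≠ 0 ∧ ∀ x : ℝ, f x = a * x + b

def IsTranslationHomeo (f : HomeoR) : Prop := ∃ b : ℝ, ∀ x : ℝ, f x = x + b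

def IsIsometryHomeo (f : HomeoR) : Prop :=
  ∃ b : ℝ, (∀ x : ℝ, f x = x + b) ∨ (∀ x : ℝ, f x = -x + b)

def IsInvariantSet (G : Subgroup HomeoR) (S : Set ℝ) : Prop :=
  ∀ g ∈ G, ∀ x ∈ S, (g : HomeoR) x ∈ S

/-- A minimal invariant set: nonempty, closed, invariant, with no proper
nonempty closed invariant subset. -/
def IsMinimalInvariant (G : Subgroup HomeoR) (M : Set ℝ) : Prop :=
  M.Nonempty ∧ IsClosed M ∧ IsInvariantSet G M ∧
    ∀ S : Set ℝ, S ⊆ M → S.Nonempty → IsClosed S → IsInvariantSet G S → S = M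

def orbitSet (G : Subgroup HomeoR) (x : ℝ) : Set ℝ := {y | ∃ g ∈ G, (g : HomeoR) x = y}

/-!
Order a freely acting group `G` by `g ≤ k ↔ g 0 ≤ k 0`. Two elements of `G` whose graphs crossed
would agree at a point, hence coincide; so `g 0 ≤ k 0` forces `g x ≤ k x` for all `x`, which makes
the order invariant under multiplication on both sides. It is Archimedean because the iterates of a
homeomorphism without fixed points escape to infinity. By Hölder's argument such an ordered group is
abelian and embeds into `ℝ` by an order-preserving homomorphism `τ`.

The semi-conjugacy `h`, with `h (g x) = h x + τ g`, is `h x = sup {τ g | g 0 ≤ x}` when `τ G` is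
dense in `ℝ`. Otherwise `G` is generated by one element `u`, and `h` is `τ u` times the inverse of a
conjugacy from the translation by `1` to `u`.
-/

theorem tendsto_iterate_atTop_of_forall_lt_apply {f : ℝ → ℝ} (hf : Continuous f)
    (hlt : ∀ x, x < f x) (x : ℝ) : Tendsto (fun n => f^[n] x) atTop atTop := by
  have hmono : Monotone fun n => f^[n] x :=
    monotone_nat_of_le_succ fun n => by simpa [iterate_succ_apply'] using (hlt _).le
  refine (tendsto_atTop_of_monotone hmono).resolve_right ?_
  rintro ⟨l, hl⟩
  exact (hlt l).ne' (isFixedPt_of_tendsto_iterate hl hf.continuousAt)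

namespace HomeoR

theorem pow_apply (f : HomeoR) (n : ℕ) (x : ℝ) : (f ^ n) x = f^[n] x := by
  induction n with
  | zero => rfl
  | succ n ih => rw [pow_succ', HomeoR.mul_apply, ih, iterate_succ_apply']

theorem zpow_apply_zpow_apply (f : HomeoR) (m n : ℤ) (x : ℝ) :
    (f ^ m) ((f ^ n) x) = (f ^ (m + n)) x := by
  rw [zpow_add, HomeoR.mul_apply]

/-- Linear from `[0, 1)` onto the fundamental domain `[0, u 0)` of `u`, extended equivariantly. -/
noncomputable def zpowFract (u : HomeoR) (y : ℝ) : ℝ := (u ^ ⌊y⌋) (u 0 * Int.fract y)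

theorem zpowFract_add_intCast (u : HomeoR) (n : ℤ) (y : ℝ) :
    u.zpowFract (y + n) = (u ^ n) (u.zpowFract y) := by
  simp only [zpowFract, Int.floor_add_intCast, Int.fract_add_intCast, add_comm _ n,
    zpow_add, HomeoR.mul_apply]

section FixedPointFree

variable {u : HomeoR} (hlt : ∀ x, x < u x)
include hlt

theorem strictMono_zpow_apply (x : ℝ) : StrictMono fun n : ℤ => (u ^ n) x :=
  strictMono_int_of_lt_succ fun n => by simpa [add_comm n 1, zpow_add] using hlt ((u ^ n) x)

theorem exists_lt_pow_apply (x y : ℝ) : ∃ n : ℕ, y < (u ^ n) x := by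
  simpa [pow_apply] using
    ((tendsto_iterate_atTop_of_forall_lt_apply u.continuous hlt x).eventually_gt_atTop y).exists

variable (hu : u ∈ HomeoPlus)
include hu

theorem exists_zpow_apply_le_lt (x : ℝ) : ∃ n : ℤ, (u ^ n) 0 ≤ x ∧ x < (u ^ (n + 1)) 0 := by
  obtain ⟨n, hn⟩ := exists_lt_pow_apply hlt 0 x
  obtain ⟨m, hm⟩ := exists_lt_pow_apply hlt x 0
  have hlow : (u ^ (-m : ℤ)) 0 ≤ x := by
    simpa [← HomeoR.mul_apply, ← zpow_add] using (HomeoPlus.zpow_mem hu (-m : ℤ)).monotone hm.le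
  obtain ⟨k, hk, hmax⟩ := Int.exists_greatest_of_bdd (P := fun k : ℤ => (u ^ k) 0 ≤ x)
    ⟨n, fun k hk => (strictMono_zpow_apply hlt 0).le_iff_le.1 (hk.trans (by simpa using hn.le))⟩
    ⟨-m, hlow⟩
  exact ⟨k, hk, lt_of_not_ge fun h => by simpa using hmax (k + 1) h⟩

theorem strictMono_zpowFract : StrictMono (zpowFract u) := by
  intro y y' hyy'
  have hu0 : 0 < u 0 := hlt 0
  rcases (Int.floor_mono hyy'.le).eq_or_lt with hfl | hfl
  · simp only [zpowFract, hfl]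
    refine HomeoPlus.zpow_mem hu _ (mul_lt_mul_of_pos_left ?_ hu0)
    rw [Int.fract, Int.fract, hfl]
    linarith
  · calc u.zpowFract y < (u ^ ⌊y⌋) (u 0) :=
          HomeoPlus.zpow_mem hu _ (mul_lt_of_lt_one_right hu0 (Int.fract_lt_one y))
      _ = (u ^ (⌊y⌋ + 1)) 0 := by rw [zpow_add_one, HomeoR.mul_apply]
      _ ≤ (u ^ ⌊y'⌋) 0 := (strictMono_zpow_apply hlt 0).monotone hfl
      _ ≤ u.zpowFract y' :=
          (HomeoPlus.zpow_mem hu _).monotone (mul_nonneg hu0.le (Int.fract_nonneg y'))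

theorem surjective_zpowFract : Surjective (zpowFract u) := by
  intro x
  have hu0 : 0 < u 0 := hlt 0
  obtain ⟨n, hn₁, hn₂⟩ := exists_zpow_apply_le_lt hlt hu x
  have ht₀ : 0 ≤ (u ^ (-n)) x := by
    simpa [zpow_apply_zpow_apply] using (HomeoPlus.zpow_mem hu (-n)).monotone hn₁
  have ht₁ : (u ^ (-n)) x < u 0 := by
    have := HomeoPlus.zpow_mem hu (-n) hn₂
    rwa [zpow_apply_zpow_apply, neg_add_cancel_left, zpow_one] at this
  refine ⟨(u ^ (-n)) x / u 0 + n, ?_⟩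
  have hy : (u ^ (-n)) x / u 0 ∈ Ico 0 1 := ⟨by positivity, (div_lt_one hu0).2 ht₁⟩
  rw [zpowFract_add_intCast, zpowFract]
  simp only [Int.floor_eq_zero_iff.2 hy, Int.fract_eq_self.2 hy, mul_div_cancel₀ _ hu0.ne',
    zpow_zero, HomeoR.one_apply, zpow_apply_zpow_apply, add_neg_cancel]

theorem exists_orderIso_add_intCast_eq_zpow_apply :
    ∃ e : ℝ ≃o ℝ, ∀ (n : ℤ) (y : ℝ), e (y + n) = (u ^ n) (e y) :=
  ⟨(strictMono_zpowFract hlt hu).orderIsoOfSurjective _ (surjective_zpowFract hlt hu),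
    zpowFract_add_intCast u⟩

end FixedPointFree

end HomeoR

section OrderedGroup

variable {α : Type*} [Group α] [LinearOrder α] [MulLeftMono α] [MulRightMono α]

theorem exists_one_lt_mul_self_le (hnomin : ∀ c : α, 1 < c → ∃ d, 1 < d ∧ d < c) {c : α}
    (hc : 1 < c) : ∃ d, 1 < d ∧ d * d ≤ c := by
  obtain ⟨d, hd, hdc⟩ := hnomin c hc
  by_cases hsq : d * d ≤ c
  · exact ⟨d, hd, hsq⟩
  · refine ⟨d⁻¹ * c, by simpa using hdc, ?_⟩
    calc d⁻¹ * c * (d⁻¹ * c) ≤ d * (d⁻¹ * c) :=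
          mul_le_mul_left (inv_mul_lt_iff_lt_mul.2 (not_le.1 hsq)).le _
      _ = c := mul_inv_cancel_left d c

variable (harch : ∀ (x : α) {y : α}, 1 < y → ∃ n : ℕ, x ≤ y ^ n)
include harch

theorem exists_zpow_le_lt {a : α} (ha : 1 < a) (g : α) :
    ∃ k : ℤ, a ^ k ≤ g ∧ g < a ^ (k + 1) := by
  have hmono : StrictMono fun k : ℤ => a ^ k := strictMono_int_of_lt_succ fun k => by
    simpa [zpow_add_one] using lt_mul_of_one_lt_right' (a ^ k) ha
  obtain ⟨n, hn⟩ := harch g ha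
  obtain ⟨m, hm⟩ := harch g⁻¹ ha
  obtain ⟨k, hk, hmax⟩ := Int.exists_greatest_of_bdd (P := fun k : ℤ => a ^ k ≤ g)
    ⟨n, fun k hk => hmono.le_iff_le.1 (hk.trans (by simpa using hn))⟩
    ⟨-m, by simpa [zpow_neg] using inv_le'.2 hm⟩
  exact ⟨k, hk, lt_of_not_ge fun h => by simpa using hmax (k + 1) h⟩

theorem commute_of_archimedean (a b : α) : Commute a b := by
  by_cases hmin : ∃ u : α, 1 < u ∧ ∀ v, 1 < v → u ≤ v
  · obtain ⟨u, hu, humin⟩ := hmin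
    have hpow : ∀ g : α, ∃ k : ℤ, u ^ k = g := fun g => by
      obtain ⟨k, hk₁, hk₂⟩ := exists_zpow_le_lt harch hu g
      refine ⟨k, hk₁.eq_or_lt.resolve_right fun hlt => ?_⟩
      have h₁ : 1 < (u ^ k)⁻¹ * g := lt_inv_mul_iff_mul_lt.2 (by rwa [mul_one])
      have h₂ : (u ^ k)⁻¹ * g < u := inv_mul_lt_iff_lt_mul.2 (by rwa [← zpow_add_one])
      exact (humin _ h₁).not_gt h₂
    obtain ⟨i, rfl⟩ := hpow a
    obtain ⟨j, rfl⟩ := hpow b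
    exact Commute.zpow_zpow_self u i j
  push Not at hmin
  show a * b = b * a
  by_contra hab
  wlog hlt : b * a < a * b generalizing a b
  · exact this b a (Ne.symm hab) ((not_lt.1 hlt).lt_of_ne hab)
  -- `a` and `b` lie between consecutive powers of `d`, so their commutator is below `d * d`
  obtain ⟨d, hd, hdc⟩ := exists_one_lt_mul_self_le hmin (c := (b * a)⁻¹ * (a * b))
    (lt_inv_mul_iff_mul_lt.2 (by rwa [mul_one]))
  obtain ⟨p, hp₁, hp₂⟩ := exists_zpow_le_lt harch hd a
  obtain ⟨q, hq₁, hq₂⟩ := exists_zpow_le_lt harch hd b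
  have hab' : a * b < d ^ (p + 1) * d ^ (q + 1) := mul_lt_mul_of_lt_of_lt hp₂ hq₂
  have hba : d ^ q * d ^ p ≤ b * a := mul_le_mul' hq₁ hp₁
  have : (b * a)⁻¹ * (a * b) < d * d := by
    calc (b * a)⁻¹ * (a * b) < (d ^ q * d ^ p)⁻¹ * (d ^ (p + 1) * d ^ (q + 1)) :=
          mul_lt_mul_of_le_of_lt (inv_le_inv_iff.2 hba) hab'
      _ = d * d := by group; exact zpow_two d
  exact this.not_ge hdc

theorem exists_strictMono_monoidHom_real : ∃ τ : α →* Multiplicative ℝ, StrictMono τ := by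
  let _ : CommGroup α := { ‹Group α› with mul_comm := commute_of_archimedean harch }
  have : IsOrderedMonoid α :=
    ⟨fun _ _ h c => mul_le_mul_left h c, fun _ _ h c => mul_le_mul_right h c⟩
  have : MulArchimedean α := ⟨harch⟩
  obtain ⟨τ, hτ⟩ := Archimedean.exists_orderAddMonoidHom_real_injective (Additive α)
  exact ⟨MonoidHom.toAdditiveLeft.symm τ.toAddMonoidHom, τ.monotone'.strictMono_of_injective hτ⟩

end OrderedGroup

theorem monotoneProper_of_denseRange {h : ℝ → ℝ} (hmono : Monotone h) (hd : DenseRange h) :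
    MonotoneProper h := by
  refine ⟨hmono.continuous_of_denseRange hd, hmono,
    tendsto_atTop_atTop_of_monotone hmono fun b => ?_,
    tendsto_atBot_atBot_of_monotone hmono fun b => ?_⟩
  · obtain ⟨_, ⟨a, rfl⟩, ha⟩ := hd.exists_between (lt_add_one b)
    exact ⟨a, ha.1.le⟩
  · obtain ⟨_, ⟨a, rfl⟩, ha⟩ := hd.exists_between (sub_one_lt b)
    exact ⟨a, ha.2.le⟩

section TranslationNumber

variable {G : Subgroup HomeoR} (τ : G →* Multiplicative ℝ)

theorem image_setOf_apply_zero_le_apply {k : G} (hk : (k : HomeoR) ∈ HomeoPlus) (x : ℝ) :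
    (fun g : G => (τ g).toAdd) '' {g | (g : HomeoR) 0 ≤ (k : HomeoR) x} =
      (· + (τ k).toAdd) '' ((fun g : G => (τ g).toAdd) '' {g | (g : HomeoR) 0 ≤ x}) := by
  ext y
  simp only [mem_image, exists_exists_and_eq_and]
  constructor
  · rintro ⟨g, hg, rfl⟩
    refine ⟨k⁻¹ * g, ?_, by simp⟩
    show (k : HomeoR)⁻¹ ((g : HomeoR) 0) ≤ x
    rwa [← hk.le_iff_le, HomeoR.inv_eq_symm, Homeomorph.apply_symm_apply]
  · rintro ⟨g, hg, rfl⟩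
    exact ⟨k * g, hk.monotone hg, by simp [add_comm]⟩

variable (hτ : ∀ g k : G, τ g ≤ τ k ↔ (g : HomeoR) 0 ≤ (k : HomeoR) 0)
include hτ

theorem toAdd_pos_iff_apply_zero_pos (g : G) : 0 < (τ g).toAdd ↔ 0 < (g : HomeoR) 0 := by
  change 1 < τ g ↔ _
  simpa using (hτ g 1).not

end TranslationNumber

def ActsFreely (G : Subgroup HomeoR) : Prop :=
  ∀ g ∈ G, g ≠ 1 → ∀ x : ℝ, g x ≠ x

namespace ActsFreely

variable {G : Subgroup HomeoR} (hG : ActsFreely G)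
include hG

theorem eq_of_apply_eq {u v : HomeoR} (hu : u ∈ G) (hv : v ∈ G) {x : ℝ} (h : u x = v x) :
    u = v := by
  by_contra hne
  refine hG (v⁻¹ * u) (G.mul_mem (G.inv_mem hv) hu) (by rwa [ne_eq, inv_mul_eq_one, eq_comm]) x ?_
  simp [h]

theorem apply_lt_apply_of_apply_lt {u v : HomeoR} (hu : u ∈ G) (hv : v ∈ G) {a : ℝ}
    (ha : u a < v a) (x : ℝ) : u x < v x := by
  by_contra! hx
  obtain ⟨c, hc⟩ := intermediate_value_univ x a (v.continuous.sub u.continuous)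
    ⟨sub_nonpos.2 hx, (sub_pos.2 ha).le⟩
  have : u = v := hG.eq_of_apply_eq hu hv (sub_eq_zero.1 hc).symm
  exact ha.ne (by rw [this])

theorem apply_le_apply_of_apply_le {u v : HomeoR} (hu : u ∈ G) (hv : v ∈ G) {a : ℝ}
    (ha : u a ≤ v a) (x : ℝ) : u x ≤ v x :=
  not_lt.1 fun hx => (hG.apply_lt_apply_of_apply_lt hv hu hx a).not_ge ha

theorem lt_apply_of_pos {g : HomeoR} (hg : g ∈ G) (h0 : 0 < g 0) (x : ℝ) : x < g x :=
  hG.apply_lt_apply_of_apply_lt G.one_mem hg h0 x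

theorem le_homeoPlus : G ≤ HomeoPlus := by
  intro g hg
  refine (g.continuous.strictMono_of_inj g.injective).resolve_right fun hanti => ?_
  rcases lt_trichotomy (g 0) 0 with h | h | h
  · exact (hG.apply_lt_apply_of_apply_lt hg G.one_mem h (g 0)).not_gt (hanti h)
  · rw [hG.eq_of_apply_eq hg G.one_mem h] at hanti
    exact absurd (hanti zero_lt_one) (by simp)
  · exact (hG.lt_apply_of_pos hg h (g 0)).not_gt (hanti h)

theorem exists_translationNumber :
    ∃ τ : G →* Multiplicative ℝ, ∀ g k : G, τ g ≤ τ k ↔ (g : HomeoR) 0 ≤ (k : HomeoR) 0 := by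
  let _ : LinearOrder G := LinearOrder.lift' (fun g : G => (g : HomeoR) 0)
    fun g k h => Subtype.ext (hG.eq_of_apply_eq g.2 k.2 h)
  have : MulLeftMono G := ⟨fun k g g' (h : (g : HomeoR) 0 ≤ (g' : HomeoR) 0) =>
    (hG.le_homeoPlus k.2).monotone h⟩
  have : MulRightMono G := ⟨fun k g g' (h : (g : HomeoR) 0 ≤ (g' : HomeoR) 0) =>
    hG.apply_le_apply_of_apply_le g.2 g'.2 h ((k : HomeoR) 0)⟩
  obtain ⟨τ, hτ⟩ := exists_strictMono_monoidHom_real (α := G) fun g f (hf : 0 < (f : HomeoR) 0) =>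
    (HomeoR.exists_lt_pow_apply (hG.lt_apply_of_pos f.2 hf) 0 ((g : HomeoR) 0)).imp
      fun _ hn => hn.le
  exact ⟨τ, fun g k => hτ.le_iff_le⟩

section SemiConj

variable (τ : G →* Multiplicative ℝ)
  (hτ : ∀ g k : G, τ g ≤ τ k ↔ (g : HomeoR) 0 ≤ (k : HomeoR) 0)
include hτ

theorem injective_of_le_iff : Injective τ := fun g k h =>
  Subtype.ext (hG.eq_of_apply_eq g.2 k.2 (le_antisymm ((hτ g k).1 h.le) ((hτ k g).1 h.ge)))

theorem exists_semiconj_of_denseRange (hd : DenseRange fun g : G => (τ g).toAdd) :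
    ∃ h : ℝ → ℝ, MonotoneProper h ∧
      ∀ (g : G) (x : ℝ), h ((g : HomeoR) x) = h x + (τ g).toAdd := by
  obtain ⟨_, ⟨f, rfl⟩, hf, -⟩ := hd.exists_between zero_lt_one
  have hflt := hG.lt_apply_of_pos f.2 ((toAdd_pos_iff_apply_zero_pos τ hτ f).1 hf)
  set S : ℝ → Set ℝ := fun x => (fun g : G => (τ g).toAdd) '' {g | (g : HomeoR) 0 ≤ x}
  have hne (x : ℝ) : (S x).Nonempty := by
    obtain ⟨n, hn, -⟩ := HomeoR.exists_zpow_apply_le_lt hflt (hG.le_homeoPlus f.2) x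
    exact ⟨_, f ^ n, by simpa using hn, rfl⟩
  have hbdd (x : ℝ) : BddAbove (S x) := by
    obtain ⟨n, -, hn⟩ := HomeoR.exists_zpow_apply_le_lt hflt (hG.le_homeoPlus f.2) x
    refine ⟨(τ (f ^ (n + 1))).toAdd, ?_⟩
    rintro _ ⟨g, hg, rfl⟩
    exact (hτ g _).2 (hg.trans (by simpa using hn.le))
  set h : ℝ → ℝ := fun x => sSup (S x)
  have hmono : Monotone h := fun x y hxy =>
    csSup_le_csSup (hbdd y) (hne x) (image_mono fun _ hg => le_trans hg hxy)
  have hval (k : G) : h ((k : HomeoR) 0) = (τ k).toAdd :=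
    le_antisymm (csSup_le (hne _) (by rintro _ ⟨g, hg, rfl⟩; exact (hτ g k).2 hg))
      (le_csSup (hbdd _) ⟨k, le_refl ((k : HomeoR) 0), rfl⟩)
  have hconj (k : G) (x : ℝ) : h ((k : HomeoR) x) = h x + (τ k).toAdd := by
    have hS : S ((k : HomeoR) x) = (· + (τ k).toAdd) '' S x :=
      image_setOf_apply_zero_le_apply τ (hG.le_homeoPlus k.2) x
    show sSup (S _) = sSup (S x) + _
    rw [hS]
    exact ((OrderIso.addRight _).map_csSup' (hne x) (hbdd x)).symm
  refine ⟨h, monotoneProper_of_denseRange hmono (hd.mono ?_), hconj⟩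
  rintro _ ⟨k, rfl⟩
  exact ⟨(k : HomeoR) 0, hval k⟩

theorem exists_semiconj_of_forall_zpow_eq {u : G} (hu : ∀ g : G, ∃ n : ℤ, u ^ n = g) :
    ∃ h : ℝ → ℝ, MonotoneProper h ∧
      ∀ (g : G) (x : ℝ), h ((g : HomeoR) x) = h x + (τ g).toAdd := by
  wlog hu0 : 0 ≤ (u : HomeoR) 0 generalizing u
  · refine this (u := u⁻¹) (fun g => ?_) ?_
    · obtain ⟨n, rfl⟩ := hu g
      exact ⟨-n, by rw [inv_zpow', neg_neg]⟩
    · have := hG.le_homeoPlus (G.inv_mem u.2) (not_le.1 hu0)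
      simp only [HomeoR.inv_eq_symm, Homeomorph.symm_apply_apply] at this
      exact this.le
  rcases hu0.eq_or_lt with hu0 | hu0
  · have hu1 : u = 1 := Subtype.ext (hG.eq_of_apply_eq u.2 G.one_mem hu0.symm)
    refine ⟨id, monotoneProper_of_denseRange monotone_id denseRange_id, fun g x => ?_⟩
    obtain ⟨n, rfl⟩ := hu g
    simp [hu1]
  obtain ⟨e, he⟩ := HomeoR.exists_orderIso_add_intCast_eq_zpow_apply
    (hG.lt_apply_of_pos u.2 hu0) (hG.le_homeoPlus u.2)
  have hc := (toAdd_pos_iff_apply_zero_pos τ hτ u).2 hu0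
  refine ⟨fun x => (τ u).toAdd * e.symm x, monotoneProper_of_denseRange ?_ ?_, ?_⟩
  · exact fun x y hxy => mul_le_mul_of_nonneg_left (e.symm.monotone hxy) hc.le
  · refine Surjective.denseRange fun y => ⟨e (y / (τ u).toAdd), ?_⟩
    simp [mul_div_cancel₀ _ hc.ne']
  · intro g x
    obtain ⟨n, rfl⟩ := hu g
    have : e.symm (((u ^ n : G) : HomeoR) x) = e.symm x + n := by
      rw [e.symm_apply_eq, he, e.apply_symm_apply, Subgroup.coe_zpow]
    simp only [this, map_zpow, toAdd_zpow, zsmul_eq_mul]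
    ring

theorem exists_semiconj :
    ∃ h : ℝ → ℝ, MonotoneProper h ∧
      ∀ (g : G) (x : ℝ), h ((g : HomeoR) x) = h x + (τ g).toAdd := by
  rcases (MonoidHom.toAdditiveLeft τ).range.dense_or_cyclic with hd | ⟨a, ha⟩
  · exact hG.exists_semiconj_of_denseRange τ hτ
      (hd.mono (range_comp_subset_range Additive.toMul _))
  · obtain ⟨u, rfl⟩ : a ∈ (MonoidHom.toAdditiveLeft τ).range :=
      ha ▸ AddSubgroup.subset_closure rfl
    refine hG.exists_semiconj_of_forall_zpow_eq τ hτ (u := u.toMul) fun g => ?_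
    have hg : (τ g).toAdd ∈ AddSubgroup.closure {MonoidHom.toAdditiveLeft τ u} :=
      ha ▸ ⟨.ofMul g, rfl⟩
    obtain ⟨n, hn⟩ := AddSubgroup.mem_closure_singleton.1 hg
    refine ⟨n, hG.injective_of_le_iff τ hτ ?_⟩
    rw [map_zpow]
    exact hn

end SemiConj

end ActsFreely

def translationHom : Multiplicative ℝ →* HomeoR where
  toFun b := Homeomorph.addRight b.toAdd
  map_one' := by ext; simp
  map_mul' a b := by ext x; simp [add_comm, add_left_comm]

/-- **Hölder's theorem.** A group acting freely on the line is abelian and its action is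
semi-conjugate to an action by translations. -/
theorem holder_theorem (G : Subgroup HomeoR)
    (hfree : ∀ g ∈ G, g ≠ 1 → ∀ x : ℝ, g x ≠ x) :
    (∀ a ∈ G, ∀ b ∈ G, a * b = b * a) ∧
    ∃ F : Subgroup HomeoR, (∀ f ∈ F, IsTranslationHomeo f) ∧ IsSemiConjTo G F := by
  have hG : ActsFreely G := hfree
  obtain ⟨τ, hτ⟩ := hG.exists_translationNumber
  obtain ⟨h, hh, hconj⟩ := hG.exists_semiconj τ hτ
  let θ := translationHom.comp τ
  refine ⟨fun a ha b hb => ?_, θ.range, ?_,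
    θ.rangeRestrict, h, θ.rangeRestrict_surjective, hh, fun g x => (hconj g x).symm⟩
  · have : τ (⟨a, ha⟩ * ⟨b, hb⟩) = τ (⟨b, hb⟩ * ⟨a, ha⟩) := by rw [map_mul, map_mul, mul_comm]
    exact congrArg Subtype.val (hG.injective_of_le_iff τ hτ this)
  · rintro _ ⟨g, rfl⟩
    exact ⟨(τ g).toAdd, fun x => rfl⟩
end

section
/- Let G ≤ Homeo(ℝ) be a subgroup and let I be a bounded open interval of ℝ such that the G-orbit of every point x ∈ ℝ intersects I. Then for every x ∈ ℝ, the closure of the orbit G·x contains a minimal invariant subset for the action of G. -/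
open Function Set Filter Topology

lemma orbitSet_invariant (G : Subgroup HomeoR) (x : ℝ) : IsInvariantSet G (orbitSet G x) := by
  rintro g hg y ⟨h, hh, rfl⟩
  exact ⟨g * h, G.mul_mem hg hh, rfl⟩

lemma closure_invariant (G : Subgroup HomeoR) {S : Set ℝ} (hS : IsInvariantSet G S) :
    IsInvariantSet G (closure S) := by
  intro g hg y hy
  have h1 : (g : HomeoR) '' closure S ⊆ closure ((g : HomeoR) '' S) :=
    image_closure_subset_closure_image (g : HomeoR).continuous
  have h2 : (g : HomeoR) '' S ⊆ S := by
    rintro _ ⟨z, hz, rfl⟩; exact hS g hg z hz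
  exact closure_mono h2 (h1 ⟨y, hy, rfl⟩)

/-- If every `G`-orbit meets a bounded open interval `(a, b)`, then the closure of every
orbit contains a minimal invariant subset. -/
theorem minimal_in_orbit_closure (G : Subgroup HomeoR) (a b : ℝ)
    (hI : ∀ x : ℝ, ∃ g ∈ G, g x ∈ Set.Ioo a b) :
    ∀ x : ℝ, ∃ M : Set ℝ, M ⊆ closure (orbitSet G x) ∧ IsMinimalInvariant G M := by
  intro x
  set K := closure (orbitSet G x) with hK
  set F : Set (Set ℝ) := {S | S ⊆ K ∧ S.Nonempty ∧ IsClosed S ∧ IsInvariantSet G S} with hF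
  have key : ∀ S ∈ F, (S ∩ Icc a b).Nonempty := by
    rintro S ⟨-, ⟨y, hy⟩, -, hinv⟩
    obtain ⟨g, hg, hgy⟩ := hI y
    exact ⟨(g : HomeoR) y, hinv g hg y hy, Ioo_subset_Icc_self hgy⟩
  have hKF : K ∈ F := by
    refine ⟨Subset.rfl, ⟨x, subset_closure ⟨1, G.one_mem, rfl⟩⟩, isClosed_closure,
      closure_invariant G (orbitSet_invariant G x)⟩
  have hchainlb : ∀ c ⊆ F, IsChain (· ⊆ ·) c → c.Nonempty → ∃ lb ∈ F, ∀ s ∈ c, lb ⊆ s := by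
    intro c hcF hchain hcne
    have hne : Nonempty c := hcne.to_subtype
    have hint : (⋂ S : c, ((S : Set ℝ) ∩ Icc a b)).Nonempty := by
      apply IsCompact.nonempty_iInter_of_directed_nonempty_isCompact_isClosed
      · rintro ⟨S, hS⟩ ⟨T, hT⟩
        rcases hchain.total hS hT with h | h
        · exact ⟨⟨S, hS⟩, Subset.rfl, inter_subset_inter_left _ h⟩
        · exact ⟨⟨T, hT⟩, inter_subset_inter_left _ h, Subset.rfl⟩
      · exact fun S => key S (hcF S.2)
      · exact fun S => (isCompact_Icc).inter_left (hcF S.2).2.2.1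
      · exact fun S => ((hcF S.2).2.2.1).inter isClosed_Icc
    refine ⟨⋂₀ c, ⟨?_, ?_, ?_, ?_⟩, fun S hS => sInter_subset_of_mem hS⟩
    · obtain ⟨S, hS⟩ := hcne
      exact (sInter_subset_of_mem hS).trans (hcF hS).1
    · obtain ⟨y, hy⟩ := hint
      refine ⟨y, ?_⟩
      rw [mem_sInter]
      intro S hS
      exact (mem_iInter.mp hy ⟨S, hS⟩).1
    · exact isClosed_sInter fun S hS => (hcF hS).2.2.1
    · intro g hg y hy
      rw [mem_sInter] at hy ⊢
      exact fun S hS => (hcF hS).2.2.2 g hg y (hy S hS)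
  obtain ⟨M, hMK, hmin⟩ := zorn_superset_nonempty F hchainlb K hKF
  obtain ⟨hMsub, hMne, hMcl, hMinv⟩ := hmin.1
  exact ⟨M, hMK, hMne, hMcl, hMinv, fun S hSM hSne hScl hSinv =>
    hSM.antisymm (hmin.2 ⟨hSM.trans hMsub, hSne, hScl, hSinv⟩ hSM)⟩
end

section
/- Let N ∈ ℕ and let G ≤ Homeo(ℝ) be a subgroup such that every non-identity element of G has at most N fixed points. Then ℝ contains a minimal invariant subset for the action of G; moreover, the closure of any nonempty G-invariant subset of ℝ contains a minimal invariant subset. -/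
open Function Set Filter Topology

/-!
If some nontrivial `g ∈ G` preserves orientation, its fixed-point set is finite, so there is a
compact interval `[a, b]` (the hull of `Fix g`, or `[0, g 0]` when `g` has no fixed point, after
replacing `g` by `g⁻¹` if needed) such that `g` or `g⁻¹` pushes points below `a` upwards without
jumping over `b`, and symmetrically above `b`. Then every nonempty closed invariant set `C` meets
`[a, b]`: if `C` meets `(-∞, b]` but not `[a, b]`, the upward-moving element maps
`sup (C ∩ (-∞, b])` to a larger point of `C ∩ (-∞, b]`; symmetrically if `C` meets `[a, ∞)`.
Cantor's intersection theorem for chains of closed sets meeting the compact set `[a, b]` lets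
Zorn's lemma produce a minimal invariant set.

If every nontrivial element reverses orientation, the product of two of them preserves it, so `G`
has at most two elements and every orbit is finite, hence a closed minimal invariant set.
-/

section Order

variable {α : Type*} [ConditionallyCompleteLinearOrder α] [TopologicalSpace α] [OrderTopology α]
  {f f' : α → α} {C : Set α} {a b : α}

lemma inter_Icc_nonempty_of_inter_Iic_nonempty (hf : Monotone f) (hfa : f a ≤ b)
    (hlt : ∀ x < a, x < f x) (hC : IsClosed C) (hfC : MapsTo f C C) (hCb : (C ∩ Iic b).Nonempty) :
    (C ∩ Icc a b).Nonempty := by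
  have hbdd : BddAbove (C ∩ Iic b) := ⟨b, fun _ hx => hx.2⟩
  obtain ⟨hcC, hcb⟩ := (hC.inter isClosed_Iic).csSup_mem hCb hbdd
  set c := sSup (C ∩ Iic b)
  refine ⟨c, hcC, not_lt.1 fun hca => ?_, hcb⟩
  have hfc : f c ∈ C ∩ Iic b := ⟨hfC hcC, (hf hca.le).trans hfa⟩
  exact (hlt c hca).not_ge (le_csSup hbdd hfc)

lemma inter_Icc_nonempty_of_inter_Ici_nonempty (hf : Monotone f) (hfb : a ≤ f b)
    (hlt : ∀ x, b < x → f x < x) (hC : IsClosed C) (hfC : MapsTo f C C)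
    (hCa : (C ∩ Ici a).Nonempty) : (C ∩ Icc a b).Nonempty := by
  obtain ⟨x, hxC, hbx, hxa⟩ :=
    inter_Icc_nonempty_of_inter_Iic_nonempty (α := αᵒᵈ) hf.dual hfb hlt hC hfC hCa
  exact ⟨x, hxC, hxa, hbx⟩

lemma inter_Icc_nonempty_of_mapsTo (hab : a ≤ b) (hf : Monotone f) (hfa : f a ≤ b)
    (hlt : ∀ x < a, x < f x) (hf' : Monotone f') (hf'b : a ≤ f' b) (hlt' : ∀ x, b < x → f' x < x)
    (hC : IsClosed C) (hne : C.Nonempty) (hfC : MapsTo f C C) (hf'C : MapsTo f' C C) :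
    (C ∩ Icc a b).Nonempty := by
  obtain ⟨z, hz⟩ := hne
  rcases le_total z b with hzb | hbz
  · exact inter_Icc_nonempty_of_inter_Iic_nonempty hf hfa hlt hC hfC ⟨z, hz, hzb⟩
  · exact inter_Icc_nonempty_of_inter_Ici_nonempty hf' hf'b hlt' hC hf'C ⟨z, hz, hab.trans hbz⟩

end Order

lemma forall_lt_self_or_forall_self_lt {X : Type*} [LinearOrder X] [TopologicalSpace X]
    [OrderClosedTopology X] {g : X → X} {s : Set X} (hs : IsPreconnected s)
    (hg : ContinuousOn g s) (hfix : ∀ x ∈ s, g x ≠ x) :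
    (∀ x ∈ s, g x < x) ∨ ∀ x ∈ s, x < g x := by
  by_contra! ⟨⟨x, hxs, hx⟩, ⟨y, hys, hy⟩⟩
  obtain ⟨z, hzs, hz⟩ := hs.intermediate_value₂ hxs hys continuousOn_id hg hx hy
  exact hfix z hzs hz.symm

lemma IsCompact.sInter_inter_nonempty_of_isChain {X : Type*} [TopologicalSpace X] {K : Set X}
    (hK : IsCompact K) {c : Set (Set X)} (hc : IsChain (· ⊆ ·) c) (hne : c.Nonempty)
    (hcl : ∀ C ∈ c, IsClosed C) (hmeet : ∀ C ∈ c, (C ∩ K).Nonempty) : (⋂₀ c ∩ K).Nonempty := by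
  have : Nonempty c := hne.to_subtype
  rw [inter_comm, sInter_eq_iInter, nonempty_iff_ne_empty]
  intro hempty
  obtain ⟨C, hC⟩ := hK.elim_directed_family_closed (fun C : c => (C : Set X))
    (fun C => hcl C C.2) hempty fun C D => (hc.total C.2 D.2).elim
      (fun h => ⟨C, subset_rfl, h⟩) fun h => ⟨D, h, subset_rfl⟩
  exact (hmeet C C.2).ne_empty (by rwa [inter_comm])

lemma inv_apply_lt_self_iff {g : HomeoR} (hg : g ∈ HomeoPlus) {x : ℝ} : g⁻¹ x < x ↔ x < g x := by
  rw [← StrictMono.lt_iff_lt hg, HomeoR.inv_eq_symm, g.apply_symm_apply]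

lemma self_lt_inv_apply_iff {g : HomeoR} (hg : g ∈ HomeoPlus) {x : ℝ} : x < g⁻¹ x ↔ g x < x := by
  rw [← StrictMono.lt_iff_lt hg, HomeoR.inv_eq_symm, g.apply_symm_apply]

lemma inv_apply_eq_self_iff {g : HomeoR} {x : ℝ} : g⁻¹ x = x ↔ g x = x := by
  rw [HomeoR.inv_eq_symm, g.symm_apply_eq, eq_comm]

section Subgroup

variable {H : Subgroup HomeoR} {g : HomeoR} {s : Set ℝ}

lemma exists_mem_forall_lt_apply (hH : H ≤ HomeoPlus) (hg : g ∈ H) (hs : IsPreconnected s)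
    (hfix : ∀ x ∈ s, g x ≠ x) : ∃ f ∈ H, (∀ x, g x = x → f x = x) ∧ ∀ x ∈ s, x < f x := by
  rcases forall_lt_self_or_forall_self_lt hs g.continuous.continuousOn hfix with hlt | hlt
  · exact ⟨g⁻¹, H.inv_mem hg, fun x => inv_apply_eq_self_iff.2,
      fun x hx => (self_lt_inv_apply_iff (hH hg)).2 (hlt x hx)⟩
  · exact ⟨g, hg, fun _ => id, hlt⟩

lemma exists_mem_forall_apply_lt (hH : H ≤ HomeoPlus) (hg : g ∈ H) (hs : IsPreconnected s)
    (hfix : ∀ x ∈ s, g x ≠ x) : ∃ f ∈ H, (∀ x, g x = x → f x = x) ∧ ∀ x ∈ s, f x < x := by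
  obtain ⟨f, hf, hfix, hlt⟩ := exists_mem_forall_lt_apply hH hg hs hfix
  exact ⟨f⁻¹, H.inv_mem hf, fun x hx => inv_apply_eq_self_iff.2 (hfix x hx),
    fun x hx => (inv_apply_lt_self_iff (hH hf)).2 (hlt x hx)⟩

end Subgroup

lemma IsInvariantSet.closure {G : Subgroup HomeoR} {S : Set ℝ} (hS : IsInvariantSet G S) :
    IsInvariantSet G (closure S) :=
  fun g hg _ hx => map_mem_closure g.continuous hx fun y hy => hS g hg y hy

lemma exists_isCompact_inter_nonempty_of_mem_homeoPlus {G : Subgroup HomeoR} {g : HomeoR}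
    (hgG : g ∈ G) (hg : g ∈ HomeoPlus) (hfix : Bornology.IsBounded (fixedPoints g)) :
    ∃ K, IsCompact K ∧
      ∀ C : Set ℝ, C.Nonempty → IsClosed C → IsInvariantSet G C → (C ∩ K).Nonempty := by
  set H := G ⊓ HomeoPlus
  have hH : H ≤ HomeoPlus := inf_le_right
  have hgH : g ∈ H := ⟨hgG, hg⟩
  suffices ∃ a b, a ≤ b ∧ ∃ f ∈ H, ∃ f' ∈ H, f a ≤ b ∧ a ≤ f' b ∧ (∀ x < a, x < f x) ∧
      ∀ x, b < x → f' x < x by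
    obtain ⟨a, b, hab, f, hf, f', hf', hfa, hf'b, hlt, hlt'⟩ := this
    refine ⟨Icc a b, isCompact_Icc, fun C hne hC hCinv => ?_⟩
    exact inter_Icc_nonempty_of_mapsTo hab (hH hf).monotone hfa hlt (hH hf').monotone hf'b hlt'
      hC hne (fun x => hCinv f hf.1 x) (fun x => hCinv f' hf'.1 x)
  rcases (fixedPoints g).eq_empty_or_nonempty with hempty | hne
  · obtain ⟨f, hf, -, hlt⟩ := exists_mem_forall_lt_apply hH hgH isPreconnected_univ
      fun x _ hx => hempty.subset hx
    refine ⟨0, f 0, (hlt 0 trivial).le, f, hf, f⁻¹, H.inv_mem hf, le_rfl, by simp,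
      fun x _ => hlt x trivial, fun x _ => (inv_apply_lt_self_iff (hH hf)).2 (hlt x trivial)⟩
  · set a := sInf (fixedPoints g)
    set b := sSup (fixedPoints g)
    have hclosed := isClosed_fixedPoints g.continuous
    have ha : g a = a := hclosed.csInf_mem hne hfix.bddBelow
    have hb : g b = b := hclosed.csSup_mem hne hfix.bddAbove
    have hab : a ≤ b := csInf_le_csSup hne hfix.bddBelow hfix.bddAbove
    obtain ⟨f, hf, hffix, hlt⟩ := exists_mem_forall_lt_apply hH hgH isPreconnected_Iio
      fun x hx hgx => (csInf_le hfix.bddBelow hgx).not_gt hx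
    obtain ⟨f', hf', hf'fix, hlt'⟩ := exists_mem_forall_apply_lt hH hgH isPreconnected_Ioi
      fun x hx hgx => (le_csSup hfix.bddAbove hgx).not_gt hx
    exact ⟨a, b, hab, f, hf, f', hf', (hffix a ha).trans_le hab, (hf'fix b hb).symm ▸ hab,
      hlt, hlt'⟩

lemma exists_isMinimalInvariant_subset_of_isCompact {G : Subgroup HomeoR} {K : Set ℝ}
    (hK : IsCompact K)
    (hmeet : ∀ C : Set ℝ, C.Nonempty → IsClosed C → IsInvariantSet G C → (C ∩ K).Nonempty)
    {F : Set ℝ} (hne : F.Nonempty) (hF : IsClosed F) (hFinv : IsInvariantSet G F) :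
    ∃ M ⊆ F, IsMinimalInvariant G M := by
  set 𝒞 : Set (Set ℝ) := {C | C.Nonempty ∧ IsClosed C ∧ IsInvariantSet G C}
  have hchain : ∀ c ⊆ 𝒞, IsChain (· ⊆ ·) c → c.Nonempty → ∃ lb ∈ 𝒞, ∀ C ∈ c, lb ⊆ C := by
    intro c hc𝒞 hc hcne
    have hcl : ∀ C ∈ c, IsClosed C := fun C hC => (hc𝒞 hC).2.1
    refine ⟨⋂₀ c, ⟨?_, isClosed_sInter hcl, ?_⟩, fun _ => sInter_subset_of_mem⟩
    · exact (hK.sInter_inter_nonempty_of_isChain hc hcne hcl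
        fun C hC => hmeet C (hc𝒞 hC).1 (hcl C hC) (hc𝒞 hC).2.2).mono inter_subset_left
    · exact fun g hg x hx => mem_sInter.2 fun C hC => (hc𝒞 hC).2.2 g hg x (hx C hC)
  obtain ⟨M, hMF, hM⟩ := zorn_superset_nonempty 𝒞 hchain F ⟨hne, hF, hFinv⟩
  exact ⟨M, hMF, hM.prop.1, hM.prop.2.1, hM.prop.2.2,
    fun S hSM hS hScl hSinv => hM.eq_of_subset ⟨hS, hScl, hSinv⟩ hSM⟩

lemma orbitSet_subset {G : Subgroup HomeoR} {S : Set ℝ} (hS : IsInvariantSet G S) {x : ℝ}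
    (hx : x ∈ S) : orbitSet G x ⊆ S := by
  rintro _ ⟨g, hg, rfl⟩
  exact hS g hg x hx

lemma isMinimalInvariant_orbitSet (G : Subgroup HomeoR) (x : ℝ) (hcl : IsClosed (orbitSet G x)) :
    IsMinimalInvariant G (orbitSet G x) := by
  have hinv : IsInvariantSet G (orbitSet G x) := by
    rintro g hg _ ⟨g', hg', rfl⟩
    exact ⟨g * g', G.mul_mem hg hg', rfl⟩
  refine ⟨⟨x, 1, G.one_mem, rfl⟩, hcl, hinv, fun S hSx ⟨_, hy⟩ _ hS => ?_⟩
  obtain ⟨g, hg, rfl⟩ := hSx hy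
  have hxS : x ∈ S := by simpa using hS g⁻¹ (G.inv_mem hg) _ hy
  exact hSx.antisymm (orbitSet_subset hS hxS)

lemma finite_orbitSet {G : Subgroup HomeoR} (hG : (G : Set HomeoR).Finite) (x : ℝ) :
    (orbitSet G x).Finite :=
  (hG.image fun g => g x).subset fun _ ⟨g, hg, hgx⟩ => ⟨g, hg, hgx⟩

lemma finite_of_forall_mem_homeoPlus {G : Subgroup HomeoR}
    (hG : ∀ g ∈ G, g ∈ HomeoPlus → g = 1) : (G : Set HomeoR).Finite := by
  have hanti : ∀ g ∈ G, g ≠ 1 → StrictAnti g := fun g hg hg1 =>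
    (g.continuous.strictMono_of_inj g.injective).resolve_left fun hmono => hg1 (hG g hg hmono)
  by_cases hex : ∃ k ∈ G, k ≠ 1
  · obtain ⟨k, hk, hk1⟩ := hex
    refine (toFinite {1, k}).subset fun g hg => or_iff_not_imp_left.2 fun hg1 => ?_
    have hmono : g * k⁻¹ ∈ HomeoPlus :=
      (hanti g hg hg1).comp (hanti k⁻¹ (G.inv_mem hk) (inv_ne_one.2 hk1))
    exact mul_inv_eq_one.1 (hG _ (G.mul_mem hg (G.inv_mem hk)) hmono)
  · exact (finite_singleton 1).subset fun g hg => not_not.1 fun hg1 => hex ⟨g, hg, hg1⟩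

lemma isBounded_fixedPoints {N : ℕ} {G : Subgroup HomeoR} (hG : HasAtMostNFixedPoints G N)
    {g : HomeoR} (hg : g ∈ G) (hg1 : g ≠ 1) : Bornology.IsBounded (fixedPoints g) := by
  obtain ⟨S, -, hS⟩ := hG g hg hg1
  exact (S.finite_toSet.subset hS).isBounded

/-- A group with at most `N` fixed points admits a minimal invariant subset; moreover the
closure of every nonempty invariant subset contains a minimal invariant subset. -/
theorem exists_minimal_invariant (N : ℕ) (G : Subgroup HomeoR)
    (hG : HasAtMostNFixedPoints G N) :
    (∃ M : Set ℝ, IsMinimalInvariant G M) ∧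
    ∀ S : Set ℝ, S.Nonempty → IsInvariantSet G S →
      ∃ M : Set ℝ, M ⊆ closure S ∧ IsMinimalInvariant G M := by
  suffices h : ∀ S : Set ℝ, S.Nonempty → IsInvariantSet G S →
      ∃ M : Set ℝ, M ⊆ closure S ∧ IsMinimalInvariant G M by
    obtain ⟨M, -, hM⟩ := h univ univ_nonempty fun _ _ _ _ => trivial
    exact ⟨⟨M, hM⟩, h⟩
  intro S hS hSinv
  by_cases hplus : ∃ g ∈ G, g ∈ HomeoPlus ∧ g ≠ 1
  · obtain ⟨g, hgG, hg, hg1⟩ := hplus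
    obtain ⟨K, hK, hmeet⟩ :=
      exists_isCompact_inter_nonempty_of_mem_homeoPlus hgG hg (isBounded_fixedPoints hG hgG hg1)
    exact exists_isMinimalInvariant_subset_of_isCompact hK hmeet hS.closure isClosed_closure
      hSinv.closure
  · push Not at hplus
    obtain ⟨x, hx⟩ := hS
    have hfin := finite_orbitSet (finite_of_forall_mem_homeoPlus hplus) x
    exact ⟨orbitSet G x, (orbitSet_subset hSinv hx).trans subset_closure,
      isMinimalInvariant_orbitSet G x hfin.isClosed⟩
end

section
/- Let N ∈ ℕ and let G ≤ Homeo(ℝ) be an abelian subgroup such that every non-identity element of G has at most N fixed points. If there exists a non-identity element f ∈ G with Fix(f) ≠ ∅, then every minimal invariant subset of the action of G is finite; moreover, for every non-identity element f ∈ G with Fix(f) ≠ ∅ there exists a minimal invariant subset contained in Fix(f). -/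
/-!
If `f ∈ G` is increasing, non-trivial and has a fixed point `p`, then a point `m` of a minimal set
`M` closest to `p` is fixed by `f`: otherwise `f` or `f⁻¹` would move `m` strictly towards `p`
inside `M`. Since `G` is abelian, `Fix(f)` is closed and `G`-invariant, so minimality forces
`M ⊆ Fix(f)`, which is finite. A decreasing `f` has a unique fixed point, which every other
element of `G` must fix; so either some non-trivial increasing element has a fixed point, or
`G ⊆ {1, f⁻¹}` and minimal sets are finite orbits. Finally `Fix(f)` itself is a finite nonempty
invariant set, and its ⊆-minimal nonempty invariant subsets are minimal invariant sets, being
finite and hence closed.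
-/

open Function Set Filter Topology

lemma HomeoR.commute_coe {a b : HomeoR} (h : a * b = b * a) : Function.Commute ⇑a ⇑b :=
  fun x => DFunLike.congr_fun h x

lemma StrictAnti.eq_of_isFixedPt {f : ℝ → ℝ} (hf : StrictAnti f) {x y : ℝ}
    (hx : IsFixedPt f x) (hy : IsFixedPt f y) : x = y := by
  by_contra hne
  rcases lt_or_gt_of_ne hne with hlt | hlt <;> exact (hf hlt).not_gt (by rwa [hx.eq, hy.eq])

lemma exists_isFixedPt_mem_of_strictMono {e : ℝ ≃ ℝ} (he : StrictMono e) {p : ℝ}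
    (hp : IsFixedPt e p) {M : Set ℝ} (hMc : IsClosed M) (hMne : M.Nonempty)
    (hMe : MapsTo e M M) (hMe' : MapsTo e.symm M M) : ∃ x ∈ M, IsFixedPt e x := by
  have he' : StrictMono e.symm := fun a b hab => by
    rwa [← he.lt_iff_lt, e.apply_symm_apply, e.apply_symm_apply]
  have hp' : IsFixedPt e.symm p := by rw [IsFixedPt, e.symm_apply_eq, hp.eq]
  obtain ⟨m, hm, hclosest⟩ := hMc.exists_infDist_eq_dist hMne p
  refine ⟨m, hm, by_contra fun hfix => ?_⟩
  have hcloser : ∃ z ∈ M, p < z ∧ z < m ∨ m < z ∧ z < p := by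
    have hsymm_lt : e.symm m < m ↔ m < e m := by rw [← he.lt_iff_lt, e.apply_symm_apply]
    have hlt_symm : m < e.symm m ↔ e m < m := by rw [← he.lt_iff_lt, e.apply_symm_apply]
    rcases lt_or_gt_of_ne hfix, lt_or_gt_of_ne (fun h : p = m => hfix (h ▸ hp)) with
      ⟨hdown | hup, hpm | hmp⟩
    · exact ⟨e m, hMe hm, .inl ⟨hp.eq ▸ he hpm, hdown⟩⟩
    · exact ⟨e.symm m, hMe' hm, .inr ⟨hlt_symm.mpr hdown, hp'.eq ▸ he' hmp⟩⟩
    · exact ⟨e.symm m, hMe' hm, .inl ⟨hp'.eq ▸ he' hpm, hsymm_lt.mpr hup⟩⟩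
    · exact ⟨e m, hMe hm, .inr ⟨hup, hp.eq ▸ he hmp⟩⟩
  obtain ⟨z, hz, hbetween⟩ := hcloser
  have hdist : dist p z < dist p m := by
    rw [Real.dist_eq, Real.dist_eq]
    rcases hbetween with ⟨h1, h2⟩ | ⟨h1, h2⟩
    · rw [abs_of_neg (by linarith), abs_of_neg (by linarith)]; linarith
    · rw [abs_of_pos (by linarith), abs_of_pos (by linarith)]; linarith
  exact (Metric.infDist_le_dist_of_mem hz).not_gt (hclosest ▸ hdist)

section Invariant

variable {G : Subgroup HomeoR}

lemma isInvariantSet_fixedPoints (hab : ∀ a ∈ G, ∀ b ∈ G, a * b = b * a) {f : HomeoR}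
    (hf : f ∈ G) : IsInvariantSet G (fixedPoints f) :=
  fun g hg => (HomeoR.commute_coe (hab g hg f hf)).mapsTo_fixedPoints

lemma HasAtMostNFixedPoints.finite_fixedPoints {N : ℕ} (hG : HasAtMostNFixedPoints G N)
    {f : HomeoR} (hf : f ∈ G) (hf1 : f ≠ 1) : (fixedPoints f).Finite :=
  let ⟨S, _, hS⟩ := hG f hf hf1
  S.finite_toSet.subset hS

lemma exists_isMinimalInvariant_subset {F : Set ℝ} (hF : F.Finite) (hne : F.Nonempty)
    (hinv : IsInvariantSet G F) : ∃ M ⊆ F, IsMinimalInvariant G M := by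
  let 𝒮 : Set (Set ℝ) := {S | S ⊆ F ∧ S.Nonempty ∧ IsInvariantSet G S}
  have h𝒮 : 𝒮.Finite := hF.finite_subsets.subset fun S hS => hS.1
  obtain ⟨M, hMF, ⟨-, hMne, hMinv⟩, hMmin⟩ := h𝒮.exists_le_minimal ⟨subset_rfl, hne, hinv⟩
  refine ⟨M, hMF, hMne, (hF.subset hMF).isClosed, hMinv, fun S hSM hSne _ hSinv => ?_⟩
  exact hSM.antisymm (hMmin ⟨hSM.trans hMF, hSne, hSinv⟩ hSM)

namespace IsMinimalInvariant

variable {M : Set ℝ}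

lemma subset_of_inter_nonempty (hM : IsMinimalInvariant G M) {S : Set ℝ} (hSc : IsClosed S)
    (hSinv : IsInvariantSet G S) (hne : (M ∩ S).Nonempty) : M ⊆ S := by
  obtain ⟨-, hMc, hMinv, hMmin⟩ := hM
  have hMS : M ∩ S = M := hMmin _ inter_subset_left hne (hMc.inter hSc)
    fun g hg x hx => ⟨hMinv g hg x hx.1, hSinv g hg x hx.2⟩
  exact hMS ▸ inter_subset_right

lemma subset_fixedPoints_of_strictMono (hM : IsMinimalInvariant G M)
    (hab : ∀ a ∈ G, ∀ b ∈ G, a * b = b * a) {f : HomeoR} (hf : f ∈ G) (hmono : StrictMono f)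
    {p : ℝ} (hp : IsFixedPt f p) : M ⊆ fixedPoints f := by
  obtain ⟨x, hxM, hx⟩ := exists_isFixedPt_mem_of_strictMono (e := f.toEquiv) hmono hp hM.2.1
    hM.1 (fun y => hM.2.2.1 f hf y) (fun y => hM.2.2.1 f⁻¹ (inv_mem hf) y)
  exact hM.subset_of_inter_nonempty (isClosed_eq f.continuous continuous_id)
    (isInvariantSet_fixedPoints hab hf) ⟨x, hxM, hx⟩

lemma finite_of_strictMono (hM : IsMinimalInvariant G M) (hab : ∀ a ∈ G, ∀ b ∈ G, a * b = b * a)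
    {N : ℕ} (hG : HasAtMostNFixedPoints G N) {f : HomeoR} (hf : f ∈ G) (hf1 : f ≠ 1)
    (hmono : StrictMono f) {p : ℝ} (hp : IsFixedPt f p) : M.Finite :=
  (hG.finite_fixedPoints hf hf1).subset (hM.subset_fixedPoints_of_strictMono hab hf hmono hp)

lemma finite_of_finite_subgroup (hM : IsMinimalInvariant G M) (hG : (G : Set HomeoR).Finite) :
    M.Finite := by
  obtain ⟨x, hxM⟩ := hM.1
  have horbit_finite : (orbitSet G x).Finite := hG.image fun g : HomeoR => g x
  have horbit_subset : orbitSet G x ⊆ M := by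
    rintro _ ⟨g, hg, rfl⟩
    exact hM.2.2.1 g hg x hxM
  have horbit_inv : IsInvariantSet G (orbitSet G x) := by
    rintro g hg _ ⟨h, hh, rfl⟩
    exact ⟨g * h, mul_mem hg hh, rfl⟩
  rw [← hM.2.2.2 _ horbit_subset ⟨x, 1, one_mem G, rfl⟩ horbit_finite.isClosed horbit_inv]
  exact horbit_finite

end IsMinimalInvariant

lemma subset_pair_of_strictAnti {f : HomeoR} (hf : f ∈ G) (hanti : StrictAnti f)
    (hinc : ∀ g ∈ G, StrictMono g → g = 1) : (G : Set HomeoR) ⊆ {1, f⁻¹} := by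
  intro g hg
  rcases g.continuous.strictMono_of_inj g.injective with hmono | hg_anti
  · exact .inl (hinc g hg hmono)
  · exact .inr (eq_inv_of_mul_eq_one_left (hinc _ (mul_mem hg hf) (hg_anti.comp hanti)))

end Invariant

/-- For an abelian group with at most `N` fixed points containing a non-trivial element
with a fixed point, every minimal invariant subset is finite, and every non-trivial element
with a fixed point has a minimal invariant subset inside its fixed point set. -/
theorem abelian_minimal_finite (N : ℕ) (G : Subgroup HomeoR)
    (hab : ∀ a ∈ G, ∀ b ∈ G, a * b = b * a)
    (hG : HasAtMostNFixedPoints G N)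
    (hex : ∃ f ∈ G, f ≠ 1 ∧ ∃ x : ℝ, f x = x) :
    (∀ M : Set ℝ, IsMinimalInvariant G M → M.Finite) ∧
    ∀ f ∈ G, f ≠ 1 → (∃ x : ℝ, f x = x) →
      ∃ M : Set ℝ, M ⊆ {x : ℝ | f x = x} ∧ IsMinimalInvariant G M := by
  refine ⟨fun M hM => ?_, fun f hf hf1 ⟨p, hp⟩ =>
    exists_isMinimalInvariant_subset (hG.finite_fixedPoints hf hf1) ⟨p, hp⟩
      (isInvariantSet_fixedPoints hab hf)⟩
  obtain ⟨f, hf, hf1, p, hp⟩ := hex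
  rcases f.continuous.strictMono_of_inj f.injective with hmono | hanti
  · exact hM.finite_of_strictMono hab hG hf hf1 hmono hp
  by_cases hinc : ∀ g ∈ G, StrictMono g → g = 1
  · exact hM.finite_of_finite_subgroup
      ((Set.toFinite {1, f⁻¹}).subset (subset_pair_of_strictAnti hf hanti hinc))
  push Not at hinc
  obtain ⟨g, hg, hgmono, hg1⟩ := hinc
  have hgp : IsFixedPt g p :=
    hanti.eq_of_isFixedPt ((isInvariantSet_fixedPoints hab hf) g hg p hp) hp
  exact hM.finite_of_strictMono hab hG hg hg1 hgmono hgp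
end

section
/- Let g, h ∈ Homeo₊(ℝ) be orientation-preserving homeomorphisms such that g(t) > t for all t ∉ {x, y} and g(x) = x, g(y) = y, and h(t) > t for all t ∉ {x̃, ỹ} and h(x̃) = x̃, h(ỹ) = ỹ, where x < x̃ < y < ỹ. Then the composition h ∘ g⁻¹ has at least one fixed point in each of the intervals (x, x̃), (x̃, y), and (y, ỹ); in particular h ∘ g⁻¹ is a non-identity homeomorphism with at least 3 fixed points. -/
open Function Set Filter Topology

/-- Two homeomorphisms of type `(+,+,+)` with interlaced fixed points
`x < x̃ < y < ỹ` produce an element `h ∘ g⁻¹` with at least three fixed points. -/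
theorem type_ppp_interlaced_fixed_points (g h : HomeoR)
    (hg : g ∈ HomeoPlus) (hh : h ∈ HomeoPlus)
    (x y xt yt : ℝ) (h1 : x < xt) (h2 : xt < y) (h3 : y < yt)
    (hgx : g x = x) (hgy : g y = y)
    (hgpos : ∀ t : ℝ, t ≠ x → t ≠ y → t < g t)
    (hhx : h xt = xt) (hhy : h yt = yt)
    (hhpos : ∀ t : ℝ, t ≠ xt → t ≠ yt → t < h t) :
    (∃ p ∈ Set.Ioo x xt, (h * g⁻¹) p = p) ∧
    (∃ p ∈ Set.Ioo xt y, (h * g⁻¹) p = p) ∧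
    (∃ p ∈ Set.Ioo y yt, (h * g⁻¹) p = p) ∧
    h * g⁻¹ ≠ 1 ∧
    ∃ S : Finset ℝ, 3 ≤ S.card ∧ ∀ p ∈ S, (h * g⁻¹) p = p := by
  have hgs : StrictMono (g : ℝ → ℝ) := hg
  have hhs : StrictMono (h : ℝ → ℝ) := hh
  set F : ℝ → ℝ := fun t => h (g.symm t) - t with hF
  have hFc : Continuous F := (h.continuous.comp g.symm.continuous).sub continuous_id
  have hgsx : g.symm x = x := g.symm_apply_eq.mpr hgx.symm
  have hgsy : g.symm y = y := g.symm_apply_eq.mpr hgy.symm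
  -- g.symm xt < xt and g.symm yt < yt
  have hsub : ∀ t : ℝ, t ≠ x → t ≠ y → g.symm t < t := by
    intro t htx hty
    have := hgpos t htx hty
    have h2 : g (g.symm t) < g t := by rw [g.apply_symm_apply]; exact this
    exact hgs.lt_iff_lt.mp h2
  have hxt1 : g.symm xt < xt := hsub xt (ne_of_gt h1) (ne_of_lt h2)
  have hyt1 : g.symm yt < yt := hsub yt (ne_of_gt (h1.trans (h2.trans h3)))
    (ne_of_gt h3)
  have hFx : 0 < F x := by
    have : x < h x := hhpos x (ne_of_lt h1) (ne_of_lt (h1.trans (h2.trans h3)))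
    simp only [hF, hgsx]; linarith
  have hFxt : F xt < 0 := by
    have : h (g.symm xt) < h xt := hhs hxt1
    simp only [hF]; rw [hhx] at this; linarith
  have hFy : 0 < F y := by
    have : y < h y := hhpos y (ne_of_gt h2) (ne_of_lt h3)
    simp only [hF, hgsy]; linarith
  have hFyt : F yt < 0 := by
    have : h (g.symm yt) < h yt := hhs hyt1
    simp only [hF]; rw [hhy] at this; linarith
  have key : ∀ a b : ℝ, a < b → F a < 0 → 0 < F b → ∃ p ∈ Set.Ioo a b, F p = 0 := by
    intro a b hab ha hb
    have := intermediate_value_Ioo hab.le (hFc.continuousOn (s := Set.Icc a b))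
    have h0 : (0 : ℝ) ∈ Set.Ioo (F a) (F b) := ⟨ha, hb⟩
    obtain ⟨p, hp, hp0⟩ := this h0
    exact ⟨p, hp, hp0⟩
  have key' : ∀ a b : ℝ, a < b → 0 < F a → F b < 0 → ∃ p ∈ Set.Ioo a b, F p = 0 := by
    intro a b hab ha hb
    have := intermediate_value_Ioo' hab.le (hFc.continuousOn (s := Set.Icc a b))
    have h0 : (0 : ℝ) ∈ Set.Ioo (F b) (F a) := ⟨hb, ha⟩
    obtain ⟨p, hp, hp0⟩ := this h0
    exact ⟨p, hp, hp0⟩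
  have hfix : ∀ p : ℝ, F p = 0 → (h * g⁻¹) p = p := by
    intro p hp
    simp only [HomeoR.mul_apply, HomeoR.inv_eq_symm]
    simp only [hF] at hp; linarith
  obtain ⟨p1, hp1, hp1f⟩ := key' x xt h1 hFx hFxt
  obtain ⟨p2, hp2, hp2f⟩ := key xt y h2 hFxt hFy
  obtain ⟨p3, hp3, hp3f⟩ := key' y yt h3 hFy hFyt
  refine ⟨⟨p1, hp1, hfix _ hp1f⟩, ⟨p2, hp2, hfix _ hp2f⟩, ⟨p3, hp3, hfix _ hp3f⟩, ?_, ?_⟩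
  · intro hc
    have : (h * g⁻¹) xt = xt := by rw [hc]; rfl
    simp only [HomeoR.mul_apply, HomeoR.inv_eq_symm] at this
    have h2' : h (g.symm xt) < h xt := hhs hxt1
    rw [hhx, this] at h2'
    exact lt_irrefl _ h2'
  · refine ⟨{p1, p2, p3}, ?_, ?_⟩
    · have h12 : p1 ≠ p2 := ne_of_lt (hp1.2.trans hp2.1)
      have h13 : p1 ≠ p3 := ne_of_lt ((hp1.2.trans hp2.1).trans (hp2.2.trans hp3.1))
      have h23 : p2 ≠ p3 := ne_of_lt (hp2.2.trans hp3.1)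
      rw [Finset.card_insert_of_notMem (by simp [h12, h13]),
        Finset.card_insert_of_notMem (by simp [h23])]
      simp
    · intro p hp
      simp only [Finset.mem_insert, Finset.mem_singleton] at hp
      rcases hp with rfl | rfl | rfl
      exacts [hfix _ hp1f, hfix _ hp2f, hfix _ hp3f]
end

section
/- Let g, h ∈ Homeo₊(ℝ) be orientation-preserving homeomorphisms such that Fix(g) = {x, y} with g(t) < t on (−∞, x) and g(t) > t on (x, y) ∪ (y, +∞), and Fix(h) = {x̃, ỹ} with h(t) < t on (−∞, x̃) and h(t) > t on (x̃, ỹ) ∪ (ỹ, +∞), where x < x̃ < ỹ < y. Then there exists n₀ ∈ ℕ such that for every n ≥ n₀, the composition h ∘ g⁻ⁿ is a non-identity homeomorphism with at least 3 fixed points: one in each of the intervals (h(x−1), x), (x, y), and (y, h(y+1)). -/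
open Function Set Filter Topology

/-! Iterates of `g⁻¹` push every point of `(-∞, x)` up to `x` and every point of `(y, ∞)` down
to `y`, while `h` moves `x` to the left and `y` to the right. So for large `n` the map `h ∘ g⁻ⁿ`
moves `x` to the left and `y` to the right, but moves a point `t₀ ∈ (h (x - 1), h x)` to the
right and a point `t₁ ∈ (h y, h (y + 1))` to the left; the intermediate value theorem gives a
fixed point in each of the gaps `(t₀, x)`, `(x, y)` and `(y, t₁)`. -/

lemma HomeoR.pow_apply_s14 (f : HomeoR) (n : ℕ) (x : ℝ) : (f ^ n) x = f^[n] x := by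
  induction n generalizing x with
  | zero => rfl
  | succ n ih => rw [pow_succ, HomeoR.mul_apply, ih, Function.iterate_succ_apply]

section FixedPoints

variable {α : Type*} [ConditionallyCompleteLinearOrder α] [TopologicalSpace α] [OrderTopology α]

lemma tendsto_iterate_isFixedPt_of_lt_map {f : α → α} (hf : Continuous f) (hmono : Monotone f)
    {c t : α} (hc : IsFixedPt f c) (htc : t ≤ c) (hlt : ∀ s ∈ Ico t c, s < f s) :
    Tendsto (fun n => f^[n] t) atTop (𝓝 c) := by
  have hle_map : t ≤ f t := by
    rcases htc.lt_or_eq with htc | rfl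
    exacts [(hlt t ⟨le_rfl, htc⟩).le, hc.ge]
  have hbdd : ∀ n, f^[n] t ≤ c := fun n => (hc.iterate n).eq ▸ hmono.iterate n htc
  have hconv := tendsto_atTop_ciSup (hmono.monotone_iterate_of_le_map hle_map)
    ⟨c, forall_mem_range.2 hbdd⟩
  set L := ⨆ n, f^[n] t
  have hL : IsFixedPt f L := isFixedPt_of_tendsto_iterate hconv hf.continuousAt
  have htL : t ≤ L := le_ciSup_of_le ⟨c, forall_mem_range.2 hbdd⟩ 0 le_rfl
  have hLc : L ≤ c := ciSup_le hbdd
  obtain rfl : L = c := hLc.eq_or_lt.resolve_right fun hLc => (hlt L ⟨htL, hLc⟩).ne hL.symm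
  exact hconv

variable [DenselyOrdered α]

lemma exists_mem_Ioo_isFixedPt_of_map_lt_of_lt_map {f : α → α} {a b : α}
    (hf : ContinuousOn f (Icc a b)) (hab : a ≤ b) (ha : f a < a) (hb : b < f b) :
    ∃ p ∈ Ioo a b, IsFixedPt f p := by
  obtain ⟨p, hp, hfp⟩ := isPreconnected_Icc.intermediate_value₂ (left_mem_Icc.2 hab)
    (right_mem_Icc.2 hab) hf continuousOn_id ha.le hb.le
  refine ⟨p, ⟨hp.1.lt_of_ne ?_, hp.2.lt_of_ne ?_⟩, hfp⟩ <;> rintro rfl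
  exacts [ha.ne hfp, hb.ne' hfp]

lemma exists_mem_Ioo_isFixedPt_of_lt_map_of_map_lt {f : α → α} {a b : α}
    (hf : ContinuousOn f (Icc a b)) (hab : a ≤ b) (ha : a < f a) (hb : f b < b) :
    ∃ p ∈ Ioo a b, IsFixedPt f p := by
  obtain ⟨p, hp, hfp⟩ := isPreconnected_Icc.intermediate_value₂ (left_mem_Icc.2 hab)
    (right_mem_Icc.2 hab) continuousOn_id hf ha.le hb.le
  refine ⟨p, ⟨hp.1.lt_of_ne ?_, hp.2.lt_of_ne ?_⟩, hfp.symm⟩ <;> rintro rfl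
  exacts [ha.ne hfp, hb.ne' hfp]

variable {h G : α → α} {c t : α}

lemma eventually_exists_mem_Ioo_isFixedPt_comp_iterate (hh : Continuous h) (hG : Continuous G)
    (hGmono : Monotone G) (hc : IsFixedPt G c) (hlt : ∀ s ∈ Ico t c, s < G s) (ht : t < h c)
    (hhc : h c < c) : ∀ᶠ n in atTop, ∃ p ∈ Ioo t c, IsFixedPt (h ∘ G^[n]) p := by
  have htc : t < c := ht.trans hhc
  have hmoved : ∀ᶠ n in atTop, t < h (G^[n] t) :=
    ((hh.tendsto c).comp (tendsto_iterate_isFixedPt_of_lt_map hG hGmono hc htc.le hlt)).eventually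
      (eventually_gt_nhds ht)
  filter_upwards [hmoved] with n hn
  refine exists_mem_Ioo_isFixedPt_of_lt_map_of_map_lt (hh.comp (hG.iterate n)).continuousOn
    htc.le hn ?_
  rwa [comp_apply, (hc.iterate n).eq]

lemma eventually_exists_mem_Ioo_isFixedPt_comp_iterate' (hh : Continuous h) (hG : Continuous G)
    (hGmono : Monotone G) (hc : IsFixedPt G c) (hgt : ∀ s ∈ Ioc c t, G s < s) (ht : h c < t)
    (hhc : c < h c) : ∀ᶠ n in atTop, ∃ p ∈ Ioo c t, IsFixedPt (h ∘ G^[n]) p :=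
  (eventually_exists_mem_Ioo_isFixedPt_comp_iterate (α := αᵒᵈ) hh hG hGmono.dual hc
    (fun s hs => hgt s ⟨hs.2, hs.1⟩) ht hhc).mono fun _ ⟨p, hp, hfix⟩ => ⟨p, ⟨hp.2, hp.1⟩, hfix⟩

end FixedPoints

theorem type_mpp_three_fixed_points_general (g h : HomeoR)
    (hg : g ∈ HomeoPlus) (hh : h ∈ HomeoPlus)
    (x y xt yt : ℝ) (h1 : x < xt) (h2 : xt < yt) (h3 : yt < y)
    (hgfix : {t : ℝ | g t = t} = {x, y})
    (hgneg : ∀ t : ℝ, t < x → g t < t)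
    (hgpos : ∀ t : ℝ, x < t → t ≠ y → t < g t)
    (hhneg : ∀ t : ℝ, t < xt → h t < t)
    (hhpos : ∀ t : ℝ, xt < t → t ≠ yt → t < h t) :
    ∃ n₀ : ℕ, ∀ n : ℕ, n₀ ≤ n →
      h * g⁻¹ ^ n ≠ 1 ∧
      (∃ p ∈ Set.Ioo (h (x - 1)) x, (h * g⁻¹ ^ n) p = p) ∧
      (∃ p ∈ Set.Ioo x y, (h * g⁻¹ ^ n) p = p) ∧
      (∃ p ∈ Set.Ioo y (h (y + 1)), (h * g⁻¹ ^ n) p = p) := by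
  have hG : StrictMono (g.symm : ℝ → ℝ) := HomeoPlus.inv_mem hg
  have hGx : IsFixedPt g.symm x := g.symm_apply_eq.2 (hgfix.ge (mem_insert x {y})).symm
  have hGy : IsFixedPt g.symm y := g.symm_apply_eq.2 (hgfix.ge (mem_insert_of_mem x rfl)).symm
  have hxy : x < y := h1.trans (h2.trans h3)
  have hhx : h x < x := hhneg x h1
  have hhy : y < h y := hhpos y (h2.trans h3) h3.ne'
  have hφ : ∀ n, ⇑(h * g⁻¹ ^ n) = h ∘ (g.symm)^[n] := fun n => funext fun t => by
    rw [HomeoR.mul_apply, HomeoR.pow_apply_s14, HomeoR.inv_eq_symm, comp_apply]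
  obtain ⟨t₀, ht₀⟩ := exists_between (hh (sub_one_lt x))
  obtain ⟨t₁, ht₁⟩ := exists_between (hh (lt_add_one y))
  have hleft := eventually_exists_mem_Ioo_isFixedPt_comp_iterate h.continuous g.symm.continuous
    hG.monotone hGx (fun s hs => by simpa using hG (hgneg s hs.2)) ht₀.2 hhx
  have hright := eventually_exists_mem_Ioo_isFixedPt_comp_iterate' h.continuous
    g.symm.continuous hG.monotone hGy
    (fun s hs => by simpa using hG (hgpos s (hxy.trans hs.1) hs.1.ne')) ht₁.1 hhy
  obtain ⟨n₀, hn₀⟩ := eventually_atTop.1 (hleft.and hright)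
  simp only [hφ]
  refine ⟨n₀, fun n hn => ⟨fun hid => ?_, ?_, ?_, ?_⟩⟩
  · have := congrFun (hφ n) x
    rw [hid, comp_apply, (hGx.iterate n).eq] at this
    exact hhx.ne' this
  · obtain ⟨p, hp, hfix⟩ := (hn₀ n hn).1
    exact ⟨p, ⟨ht₀.1.trans hp.1, hp.2⟩, hfix⟩
  · refine exists_mem_Ioo_isFixedPt_of_map_lt_of_lt_map
      (h.continuous.comp (g.symm.continuous.iterate n)).continuousOn hxy.le ?_ ?_
    · rwa [comp_apply, (hGx.iterate n).eq]
    · rwa [comp_apply, (hGy.iterate n).eq]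
  · obtain ⟨p, hp, hfix⟩ := (hn₀ n hn).2
    exact ⟨p, ⟨hp.1, hp.2.trans ht₁.2⟩, hfix⟩

/-- Two homeomorphisms of type `(−,+,+)` with fixed points `x < x̃ < ỹ < y` produce, for all
large `n`, an element `h ∘ g⁻ⁿ` with at least three fixed points. -/
theorem type_mpp_three_fixed_points (g h : HomeoR)
    (hg : g ∈ HomeoPlus) (hh : h ∈ HomeoPlus)
    (x y xt yt : ℝ) (h1 : x < xt) (h2 : xt < yt) (h3 : yt < y)
    (hgfix : {t : ℝ | g t = t} = {x, y})
    (hgneg : ∀ t : ℝ, t < x → g t < t)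
    (hgpos : ∀ t : ℝ, x < t → t ≠ y → t < g t)
    (hhfix : {t : ℝ | h t = t} = {xt, yt})
    (hhneg : ∀ t : ℝ, t < xt → h t < t)
    (hhpos : ∀ t : ℝ, xt < t → t ≠ yt → t < h t) :
    ∃ n₀ : ℕ, ∀ n : ℕ, n₀ ≤ n →
      h * g⁻¹ ^ n ≠ 1 ∧
      (∃ p ∈ Set.Ioo (h (x - 1)) x, (h * g⁻¹ ^ n) p = p) ∧
      (∃ p ∈ Set.Ioo x y, (h * g⁻¹ ^ n) p = p) ∧
      (∃ p ∈ Set.Ioo y (h (y + 1)), (h * g⁻¹ ^ n) p = p) :=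
  type_mpp_three_fixed_points_general g h hg hh x y xt yt h1 h2 h3 hgfix hgneg hgpos hhneg hhpos
end
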